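/- arXiv:2202.06834 — 3 statements merged into one kernel-verified Lean document; each statement's English description precedes it below -/
import Mathlib

section
/- Support-based filtering preserves frequent patterns: let D' be obtained from D by removing from every itemset all events e with supp(⟨{e}⟩) < θ·N. Then for every pattern P, P is frequent in D (supp_D(P) ≥ θ·N) if and only if P is frequent in D' (supp_{D'}(P) ≥ θ·N), where N is the original number of sequences. -/
/-!
Support is antitone along the subsequence relation, so every event of a frequent pattern is
itself frequent; filtering then leaves the pattern unchanged and, being monotone, preserves
each of its embeddings, so its support is unchanged. Conversely, filtering only shrinks itemsets,
so it can never raise a support above the threshold.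
-/

open Classical

def IsSubseq {E : Type*} (P S : List (Finset E)) : Prop :=
  ∃ S' : List (Finset E), S'.Sublist S ∧ List.Forall₂ (· ⊆ ·) P S'

noncomputable def supp {E : Type*} (D : List (List (Finset E))) (P : List (Finset E)) : ℕ :=
  D.countP (fun S => decide (IsSubseq P S))

namespace IsSubseq

variable {E : Type*} {P Q S : List (Finset E)}

theorem iff_sublistForall₂ : IsSubseq P S ↔ List.SublistForall₂ (· ⊆ ·) P S := by
  rw [List.sublistForall₂_iff]
  exact exists_congr fun _ => and_comm

theorem trans (hPQ : IsSubseq P Q) (hQS : IsSubseq Q S) : IsSubseq P S := by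
  rw [iff_sublistForall₂] at *
  exact _root_.trans hPQ hQS

theorem singleton_of_mem {I : Finset E} {e : E} (hI : I ∈ P) (he : e ∈ I) :
    IsSubseq [{e}] P :=
  ⟨[I], List.singleton_sublist.mpr hI, .cons (Finset.singleton_subset_iff.mpr he) .nil⟩

theorem map_self {f : Finset E → Finset E} (hf : ∀ I, f I ⊆ I) : IsSubseq (S.map f) S :=
  ⟨S, .refl S, List.forall₂_map_left_iff.mpr (List.forall₂_same.mpr fun I _ => hf I)⟩

theorem map {f : Finset E → Finset E} (hf : Monotone f) (h : IsSubseq P S) :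
    IsSubseq (P.map f) (S.map f) := by
  obtain ⟨S', hS', hPS'⟩ := h
  exact ⟨S'.map f, hS'.map f,
    List.forall₂_map_left_iff.mpr (List.forall₂_map_right_iff.mpr (hPS'.imp fun {_ _} h => hf h))⟩

theorem map_filter_iff [DecidableEq E] {p : E → Prop} [DecidablePred p]
    (hP : ∀ I ∈ P, ∀ e ∈ I, p e) :
    IsSubseq P (S.map fun I => I.filter p) ↔ IsSubseq P S := by
  refine ⟨fun h => h.trans (map_self fun I => Finset.filter_subset p I), fun h => ?_⟩
  have hPfix : P.map (fun I => I.filter p) = P :=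
    List.map_congr_left (fun I hI => Finset.filter_true_of_mem (hP I hI)) |>.trans P.map_id
  rw [← hPfix]
  exact h.map fun _ _ => Finset.filter_subset_filter p

end IsSubseq

section Support

variable {E : Type*} {D : List (List (Finset E))} {P Q : List (Finset E)}

theorem supp_le_supp (h : ∀ S, IsSubseq P S → IsSubseq Q S) : supp D P ≤ supp D Q :=
  List.countP_mono_left fun S _ hS => by simpa using h S (by simpa using hS)

theorem supp_le_supp_singleton {I : Finset E} {e : E} (hI : I ∈ P) (he : e ∈ I) :
    supp D P ≤ supp D [{e}] :=
  supp_le_supp fun _ hS => (IsSubseq.singleton_of_mem hI he).trans hS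

theorem supp_map_le {f : Finset E → Finset E} (hf : ∀ I, f I ⊆ I) :
    supp (D.map (List.map f)) P ≤ supp D P := by
  unfold supp
  rw [List.countP_map]
  exact List.countP_mono_left fun S _ hS => by
    simpa using (by simpa using hS : IsSubseq P (S.map f)).trans (IsSubseq.map_self hf)

theorem supp_map_filter_eq [DecidableEq E] {p : E → Prop} [DecidablePred p]
    (hP : ∀ I ∈ P, ∀ e ∈ I, p e) :
    supp (D.map (List.map fun I => I.filter p)) P = supp D P := by
  unfold supp
  rw [List.countP_map]
  exact List.countP_congr fun S _ => by simpa using IsSubseq.map_filter_iff hP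

end Support

theorem filtering_preserves_frequent_general {E : Type*} [DecidableEq E]
    (D : List (List (Finset E))) (θ : ℝ)
    (P : List (Finset E)) :
    θ * (D.length : ℝ) ≤ (supp D P : ℝ) ↔
      θ * (D.length : ℝ) ≤
        (supp (D.map (List.map (fun I =>
            I.filter (fun e => θ * (D.length : ℝ) ≤ (supp D [{e}] : ℝ))))) P : ℝ) := by
  constructor
  · intro hP
    have hfrequent : ∀ I ∈ P, ∀ e ∈ I, θ * (D.length : ℝ) ≤ (supp D [{e}] : ℝ) :=
      fun I hI e he => hP.trans (by exact_mod_cast supp_le_supp_singleton hI he)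
    rwa [supp_map_filter_eq hfrequent]
  · intro hP
    exact hP.trans (by exact_mod_cast supp_map_le fun I => Finset.filter_subset _ I)

/-- Support-based filtering preserves frequent patterns: removing from every itemset
of every sequence all events `e` whose singleton support is below `θ·N` changes the
support of no pattern `P` across the frequency threshold `θ·N`
(`N` being the original number of sequences). -/
theorem filtering_preserves_frequent {E : Type*} [DecidableEq E]
    (D : List (List (Finset E))) (θ : ℝ) (hθ0 : 0 < θ) (hθ1 : θ ≤ 1)
    (P : List (Finset E)) :
    θ * (D.length : ℝ) ≤ (supp D P : ℝ) ↔
      θ * (D.length : ℝ) ≤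
        (supp (D.map (List.map (fun I =>
            I.filter (fun e => θ * (D.length : ℝ) ≤ (supp D [{e}] : ℝ))))) P : ℝ) :=
  filtering_preserves_frequent_general D θ P
end

section
/- Pseudo-projection position correctness: for a sequence S (a list of events) and a pattern P, define pos(P, S) as the minimal index j such that P is a subsequence of the prefix S[1..j], if any. Then for any event e, P·e (P extended by e) is a subsequence of S if and only if pos(P, S) exists and e occurs in S at some index j' > pos(P, S); moreover, in that case pos(P·e, S) is the minimal such j'. -/
/-!
`P ++ [e]` embeds in a list `L` exactly when some occurrence `L[i] = e` has `P` embedded in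
`L.take i`. Since `P <+ S.take i` is monotone in `i`, it holds exactly for `i ≥ pos(P, S)`, so
`P ++ [e] <+ S.take j` iff some occurrence of `e` lies in `[pos(P, S), j)`; the least such `j`
is one past the least such occurrence.
-/

theorem Nat.le_iff_sInf_le_of_monotone {p : ℕ → Prop} (hp : Monotone p) (hne : ∃ n, p n)
    (j : ℕ) : p j ↔ sInf {n | p n} ≤ j := by
  classical
  rw [Nat.sInf_def (s := {n | p n}) hne, Nat.find_le_iff]
  exact ⟨fun hj => ⟨j, le_rfl, hj⟩, fun ⟨m, hmj, hm⟩ => hp hmj hm⟩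

theorem Nat.sInf_setOf_exists_lt {T : Set ℕ} (hT : T.Nonempty) :
    sInf {j | ∃ i ∈ T, i < j} = sInf T + 1 := by
  rw [Nat.sInf_upward_closed_eq_succ_iff]
  · exact ⟨⟨sInf T, Nat.sInf_mem hT, Nat.lt_succ_self _⟩,
      fun ⟨i, hi, hlt⟩ => (Nat.sInf_le hi).not_gt hlt⟩
  · rintro k₁ k₂ hk ⟨i, hi, hik⟩
    exact ⟨i, hi, hik.trans_le hk⟩

namespace List

variable {α : Type*}

theorem append_singleton_sublist_iff {P L : List α} {e : α} :
    (P ++ [e]).Sublist L ↔ ∃ i, ∃ h : i < L.length, P.Sublist (L.take i) ∧ L[i] = e := by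
  constructor
  · intro h
    obtain ⟨r₁, r₂, rfl, hP, he⟩ := append_sublist_iff.mp h
    obtain ⟨a, b, rfl⟩ := append_of_mem (singleton_sublist.mp he)
    refine ⟨(r₁ ++ a).length, by simp, ?_, ?_⟩
    · rw [← append_assoc, take_left' rfl]
      exact hP.trans (sublist_append_left r₁ a)
    · simp [← append_assoc, getElem_append_right]
  · rintro ⟨i, hi, hP, rfl⟩
    have h := hP.append
      (singleton_sublist.mpr (mem_cons_self (a := L[i]) (l := L.drop (i + 1))))
    rwa [← drop_eq_getElem_cons hi, take_append_drop] at h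

theorem append_singleton_sublist_take_iff {P S : List α} {e : α} {j : ℕ} :
    (P ++ [e]).Sublist (S.take j) ↔
      ∃ i < j, P.Sublist (S.take i) ∧ ∃ h : i < S.length, S[i] = e := by
  rw [append_singleton_sublist_iff]
  constructor
  · rintro ⟨i, hi, hP, rfl⟩
    rw [length_take, Nat.lt_min] at hi
    rw [take_take, Nat.min_eq_left hi.1.le] at hP
    exact ⟨i, hi.1, hP, hi.2, getElem_take.symm⟩
  · rintro ⟨i, hij, hP, hi, rfl⟩
    refine ⟨i, by simp [hij, hi], ?_, getElem_take⟩
    rwa [take_take, Nat.min_eq_left hij.le]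

theorem sublist_take_iff_sInf_le {P S : List α} (hPS : P.Sublist S) (j : ℕ) :
    P.Sublist (S.take j) ↔ sInf {n | P.Sublist (S.take n)} ≤ j :=
  Nat.le_iff_sInf_le_of_monotone
    (fun m _ hmn (hm : P.Sublist (S.take m)) => hm.trans (take_sublist_take_left hmn))
    ⟨S.length, by rwa [take_length]⟩ j

end List

open List in
/-- Pseudo-projection position correctness. For a sequence `S` and pattern `P`
(lists of events), `sInf {j | P <+ S.take j}` is the minimal prefix length of `S`
containing `P` as a subsequence (when `P <+ S`). Then `P ++ [e]` is a subsequence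
of `S` if and only if `P` is a subsequence of `S` and `e` occurs in `S` at some
(0-based) index `i ≥ pos(P, S)` (i.e. at 1-based position strictly greater than
`pos(P, S)`); moreover, in that case `pos(P ++ [e], S)` is one more than the minimal
such index, i.e. the minimal such 1-based position. -/
theorem pseudo_projection_correct {E : Type*} (S P : List E) (e : E) :
    ((P ++ [e]).Sublist S ↔
      P.Sublist S ∧
        ∃ i, sInf {j | P.Sublist (S.take j)} ≤ i ∧ ∃ h : i < S.length, S[i] = e) ∧
      ((P ++ [e]).Sublist S →
        sInf {j | (P ++ [e]).Sublist (S.take j)} =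
          sInf {i | sInf {j | P.Sublist (S.take j)} ≤ i ∧
            ∃ h : i < S.length, S[i] = e} + 1) := by
  set T := {i | sInf {j | P.Sublist (S.take j)} ≤ i ∧ ∃ h : i < S.length, S[i] = e}
  have extends_iff (hPS : P.Sublist S) (j : ℕ) :
      (P ++ [e]).Sublist (S.take j) ↔ ∃ i ∈ T, i < j := by
    rw [append_singleton_sublist_take_iff]
    refine exists_congr fun i => ?_
    rw [sublist_take_iff_sInf_le hPS]
    exact and_comm
  have extends_iff_nonempty : (P ++ [e]).Sublist S ↔ P.Sublist S ∧ T.Nonempty := by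
    constructor
    · intro h
      have hPS := (sublist_append_left P [e]).trans h
      obtain ⟨i, hi, -⟩ := (extends_iff hPS S.length).mp (by rwa [take_length])
      exact ⟨hPS, i, hi⟩
    · rintro ⟨hPS, i, hi⟩
      rw [← take_length (l := S), extends_iff hPS]
      exact ⟨i, hi, hi.2.1⟩
  refine ⟨extends_iff_nonempty, fun h => ?_⟩
  obtain ⟨hPS, hT⟩ := extends_iff_nonempty.mp h
  simp only [extends_iff hPS]
  exact Nat.sInf_setOf_exists_lt hT
end

section
/- Flattening via transformed events is injective and invertible: the map sending a sequence of nonempty itemsets ⟨I_1,...,I_m⟩ (each itemset given as a sorted nonempty list of distinct events) to the flat list obtained by concatenating the itemsets with the first element of each itemset replaced by its 'barred' copy is injective, and the original sequence of itemsets can be recovered by splitting the flat list at barred events. -/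
/-- Flatten one itemset (a sorted nonempty list of distinct events): the first event
is replaced by its "barred" copy (`Sum.inr`), the remaining events stay plain
(`Sum.inl`). -/
def flatBlock {E : Type*} : List E → List (E ⊕ E)
  | [] => []
  | a :: rest => Sum.inr a :: rest.map Sum.inl

/-- Flattening via transformed events: concatenate the itemsets, marking the first
event of each itemset with its barred copy. -/
def flat {E : Type*} (s : List (List E)) : List (E ⊕ E) :=
  (s.map flatBlock).flatten

/-!
Since every itemset is nonempty, each block of `flat s` begins with exactly one barred
event and contains no other. Reading the flat list from right to left, one collects
plain events until a barred event is met, which closes the current itemset.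
-/

section Unflat

variable {E : Type*}

/-- The state is the pending (still open) itemset together with the itemsets already
closed. -/
def unflatStep : E ⊕ E → List E × List (List E) → List E × List (List E)
  | .inl a, (cur, done) => (a :: cur, done)
  | .inr a, (cur, done) => ([], (a :: cur) :: done)

def unflat (l : List (E ⊕ E)) : List (List E) :=
  (l.foldr unflatStep ([], [])).2

lemma foldr_unflatStep_map_inl (r : List E) (p : List E × List (List E)) :
    (r.map Sum.inl).foldr unflatStep p = (r ++ p.1, p.2) := by
  induction r with
  | nil => rfl
  | cons a r ih => simp only [List.map_cons, List.foldr_cons, ih, unflatStep, List.cons_append]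

lemma foldr_unflatStep_flat {s : List (List E)} (hs : ∀ I ∈ s, I ≠ []) :
    (flat s).foldr unflatStep ([], []) = ([], s) := by
  induction s with
  | nil => rfl
  | cons I s ih =>
    obtain ⟨a, r, rfl⟩ := List.exists_cons_of_ne_nil (hs I List.mem_cons_self)
    have ih := ih fun J hJ => hs J (List.mem_cons_of_mem _ hJ)
    simp only [flat, List.map_cons, List.flatten_cons, List.foldr_append] at ih ⊢
    rw [ih, flatBlock, List.foldr_cons, foldr_unflatStep_map_inl, unflatStep, List.append_nil]

theorem leftInvOn_unflat_flat : Set.LeftInvOn unflat flat {s : List (List E) | ∀ I ∈ s, I ≠ []} :=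
  fun _ hs => congrArg Prod.snd (foldr_unflatStep_flat hs)

end Unflat

/-- Flattening via transformed events is injective on sequences of nonempty sorted
itemsets, and the original sequence of itemsets can be recovered from the flat list
(by splitting at barred events). -/
theorem flat_injective_invertible {E : Type*} [LinearOrder E] :
    (∀ s₁ s₂ : List (List E),
        (∀ I ∈ s₁, I ≠ [] ∧ I.Pairwise (· < ·)) →
        (∀ I ∈ s₂, I ≠ [] ∧ I.Pairwise (· < ·)) →
        flat s₁ = flat s₂ → s₁ = s₂) ∧
      ∃ g : List (E ⊕ E) → List (List E),
        ∀ s : List (List E), (∀ I ∈ s, I ≠ [] ∧ I.Pairwise (· < ·)) → g (flat s) = s :=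
  ⟨fun _ _ h₁ h₂ => leftInvOn_unflat_flat.injOn (fun I hI => (h₁ I hI).1) fun I hI => (h₂ I hI).1,
    unflat, fun _ hs => leftInvOn_unflat_flat fun I hI => (hs I hI).1⟩
end
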